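/- Let Ū = (ρ̄, m̄, Ē) ∈ 𝒢 with pressure tensor p̄ := p(Ū) (entries p̄₁₁, p̄₁₂, p̄₂₂). Let t₁, t₂ ∈ ℝ, T := [[t₁, t₂],[0, 1]], and Û := (ρ̄, Tm̄, TĒTᵀ). Set q := ((1−t₁)m̄₁ − t₂m̄₂)², N := ‖p̄^{-1/2} T p̄^{1/2}‖₂², and for θ ∈ [0,1) define f₁(θ) := (1−θ)/N, f₂(θ) := θρ̄p̄₁₁/(θρ̄p̄₁₁ + q), f₃(θ) := θρ̄·det(p̄)/(θρ̄·det(p̄) + q·p̄₂₂), and f(θ) := f₁(0) if θ = 0 and f(θ) := min{f₁(θ), f₂(θ), f₃(θ)} if θ ∈ (0,1). Assume θ ∈ [0,1) with (θ = 0 → q = 0). Then for every ξ with 0 < ξ ≤ f(θ), the state Ū − ξÛ belongs to 𝒢̄. -/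

import Mathlib

open Matrix

noncomputable section

/-- A state is a triple `(ρ, m, E)` with `ρ : ℝ`, `m : ℝ²`, `E` a 2×2 real matrix. -/
abbrev Mat2 := Matrix (Fin 2) (Fin 2) ℝ

/-- The pressure tensor `p(U) = 2E - (1/ρ) m mᵀ`. -/
def pTensor (ρ : ℝ) (m : Fin 2 → ℝ) (E : Mat2) : Mat2 :=
  (2 : ℝ) • E - ρ⁻¹ • vecMulVec m m

/-- `φ(U; z, u*) = zᵀEz − (m·z)(u*·z) + (ρ/2)(u*·z)²`. -/
def phi (ρ : ℝ) (m : Fin 2 → ℝ) (E : Mat2) (z u : Fin 2 → ℝ) : ℝ :=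
  z ⬝ᵥ (E *ᵥ z) - (m ⬝ᵥ z) * (u ⬝ᵥ z) + (ρ / 2) * (u ⬝ᵥ z) ^ 2

/-- The positive semidefinite square root of a positive semidefinite matrix (as defined in the
older Mathlib, where it was `Matrix.PosSemidef.sqrt`; it has since been removed). -/
def Matrix.PosSemidef.sqrt {n : Type*} [Fintype n] [DecidableEq n] {A : Matrix n n ℝ}
    (hA : A.PosSemidef) : Matrix n n ℝ :=
  hA.1.eigenvectorUnitary.1 * diagonal ((↑) ∘ (√·) ∘ hA.1.eigenvalues) *
    (star hA.1.eigenvectorUnitary : Matrix n n ℝ)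

/-- The admissible set `𝒢`: states with positive density and positive definite pressure tensor. -/
def G : Set (ℝ × (Fin 2 → ℝ) × Mat2) :=
  {U | 0 < U.1 ∧ (pTensor U.1 U.2.1 U.2.2).PosDef}

/-- The closed admissible set `𝒢̄`: states (so `E` symmetric) with `ρ ≥ 0` and
`φ(U; z, u*) ≥ 0` for all `z, u*`. -/
def Gbar : Set (ℝ × (Fin 2 → ℝ) × Mat2) :=
  {U | 0 ≤ U.1 ∧ U.2.2.IsSymm ∧ ∀ z u : Fin 2 → ℝ, 0 ≤ phi U.1 U.2.1 U.2.2 z u}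

/-!
Write `P = p(Ū)` and `ρ' = (1 - ξ) ρ`. As `φ` is quadratic in `u*·z`, membership of
`(ρ', m', E')` in `𝒢̄` amounts to `(m'·z)² ≤ 2 ρ' zᵀE'z` for all `z`. Since `2E = P + ρ⁻¹ m mᵀ`
and `p(Û) = T P Tᵀ`, the defect `2 ρ' zᵀE'z - (m'·z)²` equals
`(1 - ξ) ρ (zᵀPz - ξ zᵀTPTᵀz) - ξ ((m - Tm)·z)²`, where `(m - Tm)·z = ((1-t₁)m̄₁ - t₂m̄₂) z₁`.
With `P = S²`, `zᵀTPTᵀz = |(S⁻¹TS)ᵀ S z|² ≤ N zᵀPz`, so `ξ N ≤ 1 - θ` keeps `θ zᵀPz` of the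
first term; the Schur-complement bound `det P · z₁² ≤ P₂₂ · zᵀPz` and `ξ ≤ f₃(θ)` then make it
dominate the second term. Since `T` fixes `e₂` from the left, `N ≥ 1`, hence `ξ ≤ 1`.
-/

theorem mul_le_one_sub_mul_of_le_div_add {ξ D Q : ℝ} (hD : 0 < D) (hQ : 0 ≤ Q)
    (h : ξ ≤ D / (D + Q)) : ξ * Q ≤ (1 - ξ) * D := by
  rw [le_div_iff₀ (by positivity)] at h
  linarith

namespace Matrix

theorem IsSymm.mul_mul_transpose {m n R : Type*} [Fintype n] [CommSemiring R] {E : Matrix n n R}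
    (hE : E.IsSymm) (T : Matrix m n R) : (T * E * Tᵀ).IsSymm := by
  rw [IsSymm, transpose_mul, transpose_mul, transpose_transpose, hE.eq, Matrix.mul_assoc]

theorem det_fin_two_mul_sq_le {R : Type*} [CommRing R] [LinearOrder R] [IsStrictOrderedRing R]
    {P : Matrix (Fin 2) (Fin 2) R} (hP : P.IsSymm) (z : Fin 2 → R) :
    P.det * z 0 ^ 2 ≤ P 1 1 * (z ⬝ᵥ (P *ᵥ z)) := by
  have h : P 1 1 * (z ⬝ᵥ (P *ᵥ z)) = (P 0 1 * z 0 + P 1 1 * z 1) ^ 2 + P.det * z 0 ^ 2 := by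
    simp only [det_fin_two, mulVec, dotProduct, Fin.sum_univ_two, hP.apply 0 1]
    ring
  rw [h]
  exact le_add_of_nonneg_left (sq_nonneg _)

open scoped Matrix.Norms.L2Operator

section QuadraticForms

variable {m n : Type*} [Fintype m] [Fintype n]

theorem dotProduct_mul_transpose_mulVec (M : Matrix m n ℝ) (z : m → ℝ) :
    z ⬝ᵥ ((M * Mᵀ) *ᵥ z) = (Mᵀ *ᵥ z) ⬝ᵥ (Mᵀ *ᵥ z) := by
  rw [← mulVec_mulVec, dotProduct_mulVec, ← mulVec_transpose]

theorem dotProduct_self_eq_norm_sq (x : n → ℝ) :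
    x ⬝ᵥ x = ‖(EuclideanSpace.equiv n ℝ).symm x‖ ^ 2 := by
  rw [← real_inner_self_eq_norm_sq, EuclideanSpace.inner_eq_star_dotProduct]
  simp

theorem dotProduct_self_mulVec_le_l2_opNorm_sq [DecidableEq m] [DecidableEq n] (A : Matrix m n ℝ)
    (x : n → ℝ) : (A *ᵥ x) ⬝ᵥ (A *ᵥ x) ≤ ‖A‖ ^ 2 * (x ⬝ᵥ x) := by
  rw [dotProduct_self_eq_norm_sq, dotProduct_self_eq_norm_sq, ← mul_pow]
  gcongr
  exact A.l2_opNorm_mulVec _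

theorem dotProduct_conj_mulVec_le [DecidableEq n] {S : Matrix n n ℝ} (hS : Sᵀ = S)
    (hdet : IsUnit S.det) (T : Matrix n n ℝ) (z : n → ℝ) :
    z ⬝ᵥ ((T * (S * S) * Tᵀ) *ᵥ z) ≤ ‖S⁻¹ * T * S‖ ^ 2 * (z ⬝ᵥ ((S * S) *ᵥ z)) := by
  set B := S⁻¹ * T * S
  have hSB : S * B = T * S := by
    simp only [B, ← Matrix.mul_assoc, mul_nonsing_inv _ hdet, Matrix.one_mul]
  have hconj : T * (S * S) * Tᵀ = S * B * (S * B)ᵀ := by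
    rw [hSB, transpose_mul, hS, Matrix.mul_assoc, Matrix.mul_assoc, Matrix.mul_assoc]
  have hsq : S * S = S * Sᵀ := by rw [hS]
  rw [hconj, hsq, dotProduct_mul_transpose_mulVec, dotProduct_mul_transpose_mulVec, transpose_mul,
    ← mulVec_mulVec, hS, ← l2_opNorm_conjTranspose B, conjTranspose_eq_transpose_of_trivial]
  exact dotProduct_self_mulVec_le_l2_opNorm_sq _ _

end QuadraticForms

variable {n : Type*} [Fintype n]

open scoped MatrixOrder in
theorem PosSemidef.sqrt_eq_cfc [DecidableEq n] {A : Matrix n n ℝ} (hA : A.PosSemidef) :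
    hA.sqrt = cfc Real.sqrt A := by
  rw [hA.1.cfc_eq]
  rfl

open scoped MatrixOrder in
theorem PosSemidef.sqrt_mul_self [DecidableEq n] {A : Matrix n n ℝ} (hA : A.PosSemidef) :
    hA.sqrt * hA.sqrt = A := by
  have hA' : IsSelfAdjoint A := hA.1
  rw [hA.sqrt_eq_cfc, ← cfc_mul Real.sqrt Real.sqrt A]
  conv_rhs => rw [← cfc_id' ℝ A]
  exact cfc_congr fun x hx => Real.mul_self_sqrt (spectrum_nonneg_of_nonneg hA.nonneg hx)

theorem PosSemidef.transpose_sqrt [DecidableEq n] {A : Matrix n n ℝ} (hA : A.PosSemidef) :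
    hA.sqrtᵀ = hA.sqrt := by
  rw [hA.sqrt_eq_cfc, ← conjTranspose_eq_transpose_of_trivial]
  exact cfc_predicate (R := ℝ) Real.sqrt A

theorem PosDef.dotProduct_conj_mulVec_le [DecidableEq n] {P : Matrix n n ℝ} (hP : P.PosDef)
    (T : Matrix n n ℝ) (z : n → ℝ) : z ⬝ᵥ ((T * P * Tᵀ) *ᵥ z) ≤
      ‖toEuclideanCLM (𝕜 := ℝ) (hP.posSemidef.sqrt⁻¹ * T * hP.posSemidef.sqrt)‖ ^ 2 *
        (z ⬝ᵥ (P *ᵥ z)) := by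
  have hS := hP.posSemidef.sqrt_mul_self
  have hdet : IsUnit hP.posSemidef.sqrt.det := by
    refine isUnit_iff_ne_zero.mpr fun h => hP.det_pos.ne' ?_
    rw [← hS, det_mul, h, zero_mul]
  have h := Matrix.dotProduct_conj_mulVec_le hP.posSemidef.transpose_sqrt hdet T z
  rwa [hS] at h

theorem PosDef.one_le_of_dotProduct_conj_le {P T : Matrix n n ℝ} (hP : P.PosDef) {v : n → ℝ}
    (hv : v ≠ 0) (hTv : Tᵀ *ᵥ v = v) {N : ℝ}
    (h : v ⬝ᵥ ((T * P * Tᵀ) *ᵥ v) ≤ N * (v ⬝ᵥ (P *ᵥ v))) : 1 ≤ N := by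
  rw [← mulVec_mulVec, ← mulVec_mulVec, dotProduct_mulVec, ← mulVec_transpose, hTv] at h
  have hpos : 0 < v ⬝ᵥ (P *ᵥ v) := by simpa using hP.dotProduct_mulVec_pos hv
  exact le_of_mul_le_mul_right (by linarith) hpos

end Matrix

theorem pTensor_conj (ρ : ℝ) (m : Fin 2 → ℝ) (E T : Mat2) :
    pTensor ρ (T *ᵥ m) (T * E * Tᵀ) = T * pTensor ρ m E * Tᵀ := by
  rw [pTensor, pTensor, Matrix.mul_sub, Matrix.sub_mul, Matrix.mul_smul, Matrix.smul_mul,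
    Matrix.mul_smul, Matrix.smul_mul, mul_vecMulVec, vecMulVec_mul, vecMul_transpose]

theorem dotProduct_pTensor_mulVec (ρ : ℝ) (m : Fin 2 → ℝ) (E : Mat2) (z : Fin 2 → ℝ) :
    z ⬝ᵥ (pTensor ρ m E *ᵥ z) = 2 * (z ⬝ᵥ (E *ᵥ z)) - ρ⁻¹ * (m ⬝ᵥ z) ^ 2 := by
  simp only [pTensor, sub_mulVec, smul_mulVec, vecMulVec_mulVec, dotProduct_sub, dotProduct_smul]
  rw [op_smul_eq_mul, dotProduct_comm z m, smul_eq_mul, smul_eq_mul, sq]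

theorem mem_Gbar_of_sq_le {ρ : ℝ} {m : Fin 2 → ℝ} {E : Mat2} (hρ : 0 ≤ ρ) (hE : E.IsSymm)
    (hsq : ∀ z, (m ⬝ᵥ z) ^ 2 ≤ 2 * ρ * (z ⬝ᵥ (E *ᵥ z)))
    (hdeg : ρ = 0 → ∀ z, 0 ≤ z ⬝ᵥ (E *ᵥ z)) : (ρ, m, E) ∈ Gbar := by
  refine ⟨hρ, hE, fun z u => ?_⟩
  rcases hρ.eq_or_lt with hρ0 | hρpos
  · have hmz : m ⬝ᵥ z = 0 := by
      simpa [← hρ0] using hsq z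
    simpa [phi, ← hρ0, hmz] using hdeg hρ0.symm z
  · have := hsq z
    unfold phi
    nlinarith [sq_nonneg (ρ * (u ⬝ᵥ z) - m ⬝ᵥ z)]

theorem sub_smul_mem_Gbar {ρ ξ : ℝ} {m m' : Fin 2 → ℝ} {E E' : Mat2} (hρ : 0 < ρ)
    (hE : E.IsSymm) (hE' : E'.IsSymm) (hξ : ξ ≤ 1)
    (hdiff : ∀ z, ξ * ((m - m') ⬝ᵥ z) ^ 2 ≤
      (1 - ξ) * ρ * (z ⬝ᵥ (pTensor ρ m E *ᵥ z) - ξ * (z ⬝ᵥ (pTensor ρ m' E' *ᵥ z))))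
    (hpos : ∀ z, 0 ≤ z ⬝ᵥ (pTensor ρ m E *ᵥ z) - ξ * (z ⬝ᵥ (pTensor ρ m' E' *ᵥ z))) :
    (ρ - ξ * ρ, m - ξ • m', E - ξ • E') ∈ Gbar := by
  have hρinv : ρ * ρ⁻¹ = 1 := mul_inv_cancel₀ hρ.ne'
  refine mem_Gbar_of_sq_le (by nlinarith) (hE.sub (hE'.smul ξ)) (fun z => ?_) (fun hρ0 z => ?_)
  all_goals
    have hdz := hdiff z
    have hpz := hpos z
    simp only [dotProduct_pTensor_mulVec, sub_dotProduct] at hdz hpz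
    simp only [sub_mulVec, smul_mulVec, dotProduct_sub, dotProduct_smul, sub_dotProduct,
      smul_dotProduct, smul_eq_mul]
  · linear_combination hdz + (1 - ξ) * (ξ * (m' ⬝ᵥ z) ^ 2 - (m ⬝ᵥ z) ^ 2) * hρinv
  · have hξ1 : ξ = 1 := by nlinarith
    subst hξ1
    have hmz : m ⬝ᵥ z = m' ⬝ᵥ z := by nlinarith
    rw [hmz] at hpz
    linarith

theorem sub_smul_conj_mem_Gbar {ρ t1 t2 N θ ξ : ℝ} {m : Fin 2 → ℝ} {E : Mat2} (hρ : 0 < ρ)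
    (hE : E.IsSymm) (hp : (pTensor ρ m E).PosDef)
    (hconj : ∀ z, z ⬝ᵥ ((!![t1, t2; 0, 1] * pTensor ρ m E * !![t1, t2; 0, 1]ᵀ) *ᵥ z) ≤
      N * (z ⬝ᵥ (pTensor ρ m E *ᵥ z)))
    (hN : 1 ≤ N) (hθ : 0 ≤ θ) (hξ : 0 < ξ) (hξN : ξ * N ≤ 1 - θ)
    (hξq : ξ * (((1 - t1) * m 0 - t2 * m 1) ^ 2 * pTensor ρ m E 1 1) ≤
      (1 - ξ) * (θ * ρ * (pTensor ρ m E).det)) :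
    (ρ - ξ * ρ, m - ξ • (!![t1, t2; 0, 1] *ᵥ m),
      E - ξ • (!![t1, t2; 0, 1] * E * !![t1, t2; 0, 1]ᵀ)) ∈ Gbar := by
  set T : Mat2 := !![t1, t2; 0, 1]
  set P := pTensor ρ m E
  have hξ1 : ξ ≤ 1 := by nlinarith
  have hPz (z : Fin 2 → ℝ) : 0 ≤ z ⬝ᵥ (P *ᵥ z) := by
    simpa using hp.posSemidef.dotProduct_mulVec_nonneg z
  have hgap (z : Fin 2 → ℝ) :
      θ * (z ⬝ᵥ (P *ᵥ z)) ≤ z ⬝ᵥ (P *ᵥ z) - ξ * (z ⬝ᵥ ((T * P * Tᵀ) *ᵥ z)) := by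
    nlinarith [hconj z, hPz z]
  refine sub_smul_mem_Gbar hρ hE (hE.mul_mul_transpose T) hξ1 (fun z => ?_)
    (fun z => ?_) <;> rw [pTensor_conj]
  · have hmz : (m - T *ᵥ m) ⬝ᵥ z = ((1 - t1) * m 0 - t2 * m 1) * z 0 := by
      simp only [T, dotProduct, cons_mulVec, Fin.sum_univ_two, cons_val_zero, cons_val_one,
        cons_val_fin_one, empty_mulVec, Pi.sub_apply]
      ring
    have hP11 : 0 < P 1 1 := hp.diag_pos
    have hdet := det_fin_two_mul_sq_le (isHermitian_iff_isSymm.mp hp.isHermitian) z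
    have hθa : ξ * ((1 - t1) * m 0 - t2 * m 1) ^ 2 * z 0 ^ 2 ≤
        (1 - ξ) * θ * ρ * (z ⬝ᵥ (P *ᵥ z)) := by
      refine le_of_mul_le_mul_left ?_ hP11
      have hc : 0 ≤ (1 - ξ) * θ * ρ := mul_nonneg (mul_nonneg (by linarith) hθ) hρ.le
      nlinarith [mul_le_mul_of_nonneg_left hdet hc,
        mul_le_mul_of_nonneg_right hξq (sq_nonneg (z 0))]
    rw [hmz, mul_pow]
    nlinarith [mul_le_mul_of_nonneg_left (hgap z) (by nlinarith : 0 ≤ (1 - ξ) * ρ)]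
  · exact (mul_nonneg hθ (hPz z)).trans (hgap z)

theorem state_minus_xi_hat_mem_closure_general
    (ρ : ℝ) (m : Fin 2 → ℝ) (E : Mat2) (hρ : 0 < ρ) (hE : E.IsSymm)
    (hp : (pTensor ρ m E).PosDef)
    (t1 t2 : ℝ) (T : Mat2) (hT : T = !![t1, t2; 0, 1])
    (q Nv : ℝ)
    (hq : q = ((1 - t1) * m 0 - t2 * m 1) ^ 2)
    (hN : Nv = ‖toEuclideanCLM (𝕜 := ℝ)
        ((hp.posSemidef.sqrt)⁻¹ * T * hp.posSemidef.sqrt)‖ ^ 2)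
    (θ : ℝ) (hθ0 : 0 ≤ θ) (hθq : θ = 0 → q = 0)
    (f : ℝ)
    (hf : f = if θ = 0 then (1 - (0:ℝ)) / Nv
      else min ((1 - θ) / Nv)
        (min (θ * ρ * (pTensor ρ m E) 0 0 / (θ * ρ * (pTensor ρ m E) 0 0 + q))
             (θ * ρ * (pTensor ρ m E).det /
               (θ * ρ * (pTensor ρ m E).det + q * (pTensor ρ m E) 1 1))))
    (ξ : ℝ) (hξ0 : 0 < ξ) (hξf : ξ ≤ f) :
    (ρ - ξ * ρ, m - ξ • (T *ᵥ m), E - ξ • (T * E * Tᵀ)) ∈ Gbar := by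
  have hconj := hN ▸ hp.dotProduct_conj_mulVec_le T
  subst hT
  have hN1 : 1 ≤ Nv := hp.one_le_of_dotProduct_conj_le (v := ![0, 1]) (by simp)
    (by ext i; fin_cases i <;> simp [mulVec, dotProduct, Fin.sum_univ_two]) (hconj _)
  have hξN : ξ * Nv ≤ 1 - θ := by
    rw [← le_div_iff₀ (by linarith)]
    split_ifs at hf with hθ
    · simpa [hθ, hf] using hξf
    · exact hξf.trans (hf ▸ min_le_left _ _)
  have hξq : ξ * (q * pTensor ρ m E 1 1) ≤ (1 - ξ) * (θ * ρ * (pTensor ρ m E).det) := by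
    rcases hθ0.eq_or_lt with hθ | hθpos
    · simp [← hθ, hθq hθ.symm]
    · rw [hf, if_neg hθpos.ne'] at hξf
      exact mul_le_one_sub_mul_of_le_div_add (by have := hp.det_pos; positivity)
        (mul_nonneg (hq ▸ sq_nonneg _) hp.diag_pos.le)
        (hξf.trans ((min_le_right _ _).trans (min_le_right _ _)))
  exact sub_smul_conj_mem_Gbar hρ hE hp hconj hN1 hθ0 hξ0 hξN (hq ▸ hξq)

/-- Lemma 3.1 of the paper: for `0 < ξ ≤ f(θ)`, the state `Ū − ξÛ` lies in `𝒢̄`. -/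
theorem state_minus_xi_hat_mem_closure
    (ρ : ℝ) (m : Fin 2 → ℝ) (E : Mat2) (hρ : 0 < ρ) (hE : E.IsSymm)
    (hp : (pTensor ρ m E).PosDef)
    (t1 t2 : ℝ) (T : Mat2) (hT : T = !![t1, t2; 0, 1])
    (q Nv : ℝ)
    (hq : q = ((1 - t1) * m 0 - t2 * m 1) ^ 2)
    (hN : Nv = ‖toEuclideanCLM (𝕜 := ℝ)
        ((hp.posSemidef.sqrt)⁻¹ * T * hp.posSemidef.sqrt)‖ ^ 2)
    (θ : ℝ) (hθ0 : 0 ≤ θ) (hθ1 : θ < 1) (hθq : θ = 0 → q = 0)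
    (f : ℝ)
    (hf : f = if θ = 0 then (1 - (0:ℝ)) / Nv
      else min ((1 - θ) / Nv)
        (min (θ * ρ * (pTensor ρ m E) 0 0 / (θ * ρ * (pTensor ρ m E) 0 0 + q))
             (θ * ρ * (pTensor ρ m E).det /
               (θ * ρ * (pTensor ρ m E).det + q * (pTensor ρ m E) 1 1))))
    (ξ : ℝ) (hξ0 : 0 < ξ) (hξf : ξ ≤ f) :
    (ρ - ξ * ρ, m - ξ • (T *ᵥ m), E - ξ • (T * E * Tᵀ)) ∈ Gbar :=
  state_minus_xi_hat_mem_closure_general ρ m E hρ hE hp t1 t2 T hT q Nv hq hN θ hθ0 hθq f hf ξ hξ0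
    hξf
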